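/- Let f̃ : ℝ² → ℝ² be a lift of a torus homeomorphism homotopic to the identity. If there exists v ∈ ℝ² ∖ {0} such that f̃ does not have bounded deviation from v, then the sequence (A_n) admits at least one good limit value: there exist a nonempty compact set A_∞ ⊆ ℝ² and a strictly increasing sequence (n_k) of integers with d_{n_k} → +∞ such that the Hausdorff distance between A_{n_k} and A_∞ tends to 0. -/

import Mathlib

open Metric Set Filter Topology

noncomputable section

abbrev E2 : Type := EuclideanSpace ℝ (Fin 2)

/-- The image in `ℝ²` of an integer vector. -/
def intVec (v : Fin 2 → ℤ) : E2 := WithLp.toLp 2 (fun i => (v i : ℝ))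

/-- `f` is a lift of a torus homeomorphism homotopic to the identity. -/
def IsLift (f : E2 → E2) : Prop :=
  ∀ (x : E2) (v : Fin 2 → ℤ), f (x + intVec v) = f x + intVec v

/-- Lift condition for a homeomorphism of the torus whose linear part is the
integer matrix `A`. -/
def IsLiftMat (f : E2 → E2) (A : Matrix (Fin 2) (Fin 2) ℤ) : Prop :=
  ∀ (x : E2) (v : Fin 2 → ℤ), f (x + intVec v) = f x + intVec (A.mulVec v)

/-- Lift condition for a homeomorphism homotopic to the Dehn twist with matrix
`[[1,k₀],[0,1]]`. -/
def IsDehnLift (f : E2 → E2) (k₀ : ℤ) : Prop :=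
  (∀ x : E2, f (x + intVec ![1, 0]) = f x + intVec ![1, 0]) ∧
  (∀ x : E2, f (x + intVec ![0, 1]) = f x + intVec ![k₀, 1])

/-- The fundamental domain `D = [0,1] × [0,1]`. -/
def Dom : Set E2 := {x | x 0 ∈ Icc (0:ℝ) 1 ∧ x 1 ∈ Icc (0:ℝ) 1}

/-- `d_n`, the diameter of `f̃ⁿ(D)`. -/
def dn (f : E2 → E2) (n : ℕ) : ℝ := Metric.diam (f^[n] '' Dom)

/-- `A_n = d_n⁻¹ • (f̃ⁿ(D) − f̃ⁿ(x₀))`. -/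
def An (f : E2 → E2) (x₀ : E2) (n : ℕ) : Set E2 :=
  (fun y => (dn f n)⁻¹ • (y - f^[n] x₀)) '' (f^[n] '' Dom)

/-- A good limit value of the sequence `(A_n)`: a compact set which is the
Hausdorff limit of a subsequence `(A_{n_k})` with `d_{n_k} → +∞`. -/
def IsGoodLimit (f : E2 → E2) (x₀ : E2) (A : Set E2) : Prop :=
  IsCompact A ∧ ∃ nk : ℕ → ℕ, StrictMono nk ∧
    Tendsto (fun k => dn f (nk k)) atTop atTop ∧
    Tendsto (fun k => Metric.hausdorffDist (An f x₀ (nk k)) A) atTop (nhds 0)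

/-- A vector of irrational slope: nonzero and not a real multiple of a nonzero
integer vector. -/
def IrrationalSlope (u : E2) : Prop :=
  u ≠ 0 ∧ ¬∃ (t : ℝ) (w : Fin 2 → ℤ), w ≠ 0 ∧ u = t • intVec w

/-- `f` has bounded deviation from direction `v`. -/
def BoundedDeviation (f : E2 → E2) (v : E2) : Prop :=
  ∃ (ρ : E2) (M : ℝ), 0 ≤ M ∧
    ∀ (x : E2) (n : ℕ), |(inner ℝ (f^[n] x - x - (n : ℝ) • ρ) v : ℝ)| ≤ M

/-- The rotation set of `f`. -/
def rotSet (f : E2 → E2) : Set E2 :=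
  {w | ∃ (y : ℕ → E2) (m : ℕ → ℕ), Tendsto m atTop atTop ∧
    Tendsto (fun k => (m k : ℝ)⁻¹ • (f^[m k] (y k) - y k)) atTop (nhds w)}

/-- The line `ℝ•u` through the origin. -/
def lineThrough (u : E2) : Set E2 := {x | ∃ t : ℝ, x = t • u}

/-! If the diameters `d_n` were bounded, the displacement `f̃ⁿ(x) − x` would vary by
a bounded amount as `x` ranges over `ℝ²` (by periodicity it suffices to let `x` range over `D`),
so `n ↦ ⟨f̃ⁿ(x₀) − x₀, v⟩` would be additive up to a bounded error, hence within bounded distance of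
a linear function `n ↦ n L`: that is bounded deviation from `v`. So `d_n` is unbounded along a
subsequence; the normalized sets `A_n` all lie in the closed unit ball, and the Blaschke selection
theorem (compactness of the nonempty compact subsets of a compact set for the Hausdorff metric)
gives a further subsequence converging to a good limit value. -/

open scoped RealInnerProductSpace

theorem exists_abs_sub_mul_le_of_abs_add_sub_le {a : ℕ → ℝ} {c : ℝ}
    (h : ∀ m n, |a (m + n) - a m - a n| ≤ c) : ∃ L : ℝ, ∀ n : ℕ, |a n - n * L| ≤ c := by
  have hmul : ∀ k n : ℕ, |a ((k + 1) * n) - (k + 1) * a n| ≤ k * c := by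
    intro k n
    induction k with
    | zero => simp
    | succ k ih =>
      calc |a ((k + 1 + 1) * n) - ((k + 1 : ℕ) + 1) * a n|
          = |(a ((k + 1) * n + n) - a ((k + 1) * n) - a n)
              + (a ((k + 1) * n) - (k + 1) * a n)| := by
            congr 1; rw [add_mul _ 1 n, one_mul]; push_cast; ring
        _ ≤ c + k * c := (abs_add_le _ _).trans (add_le_add (h _ _) ih)
        _ = (k + 1 : ℕ) * c := by push_cast; ring
  -- Compare `a ((q + 1) * (p + 1))` with both `(q + 1) * a (p + 1)` and `(p + 1) * a (q + 1)`.
  have hcross : ∀ p q : ℕ, (a (p + 1) - c) / (p + 1) ≤ (a (q + 1) + c) / (q + 1) := by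
    intro p q
    have h₁ := abs_le.1 (hmul q (p + 1))
    have h₂ := abs_le.1 (hmul p (q + 1))
    rw [mul_comm (p + 1)] at h₂
    rw [div_le_div_iff₀ (by positivity) (by positivity)]
    linarith [(abs_nonneg (a 0)).trans (by simpa using h 0 0 : |a 0| ≤ c)]
  have hbdd : BddAbove (range fun p : ℕ => (a (p + 1) - c) / (p + 1)) :=
    ⟨_, forall_mem_range.2 fun p => hcross p 0⟩
  refine ⟨⨆ p : ℕ, (a (p + 1) - c) / (p + 1), fun n => ?_⟩
  cases n with
  | zero => simpa using h 0 0
  | succ n =>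
    have hlow := le_ciSup hbdd n
    have hup := ciSup_le fun p => hcross p n
    rw [div_le_iff₀ (by positivity)] at hlow
    rw [le_div_iff₀ (by positivity)] at hup
    push_cast
    rw [abs_le]
    constructor <;> linarith

theorem boundedDeviation_of_abs_inner_sub_le {f : E2 → E2} {v : E2} (hv : v ≠ 0) (x₀ : E2) {c : ℝ}
    (h : ∀ x n, |⟪(f^[n] x - x) - (f^[n] x₀ - x₀), v⟫| ≤ c) : BoundedDeviation f v := by
  set a : ℕ → ℝ := fun n => ⟪f^[n] x₀ - x₀, v⟫
  have hquasi : ∀ m n, |a (m + n) - a m - a n| ≤ c := fun m n => by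
    convert h (f^[n] x₀) m using 2
    simp only [a, Function.iterate_add_apply, ← inner_sub_left]
    congr 1; abel
  obtain ⟨L, hL⟩ := exists_abs_sub_mul_le_of_abs_add_sub_le hquasi
  refine ⟨(L / ‖v‖ ^ 2) • v, 2 * c, by linarith [(abs_nonneg _).trans (h x₀ 0)], fun x n => ?_⟩
  have hρ : ⟪(n : ℝ) • (L / ‖v‖ ^ 2) • v, v⟫ = n * L := by
    rw [real_inner_smul_left, real_inner_smul_left, real_inner_self_eq_norm_sq]
    field_simp [norm_ne_zero_iff.2 hv]
  calc |⟪f^[n] x - x - (n : ℝ) • (L / ‖v‖ ^ 2) • v, v⟫|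
      = |⟪(f^[n] x - x) - (f^[n] x₀ - x₀), v⟫ + (a n - n * L)| := by
        rw [inner_sub_left, hρ, inner_sub_left (f^[n] x - x)]
        simp only [a]
        congr 1; ring
    _ ≤ c + c := (abs_add_le _ _).trans (add_le_add (h x n) (hL n))
    _ = 2 * c := by ring

theorem IsLift.iterate {f : E2 → E2} (hf : IsLift f) (n : ℕ) : IsLift f^[n] := by
  induction n with
  | zero => intro x v; simp
  | succ n ih =>
    intro x v
    rw [Function.iterate_succ_apply', Function.iterate_succ_apply', ih x v, hf]

theorem exists_mem_Dom_add_intVec (x : E2) : ∃ y ∈ Dom, ∃ w : Fin 2 → ℤ, x = y + intVec w := by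
  refine ⟨x - intVec (fun i => ⌊x i⌋), ⟨?_, ?_⟩, fun i => ⌊x i⌋, by abel⟩ <;>
  · simp only [PiLp.sub_apply, intVec]
    exact ⟨sub_nonneg.2 (Int.floor_le _),
      by linarith [Int.sub_one_lt_floor (x 0), Int.sub_one_lt_floor (x 1)]⟩

theorem norm_le_two_of_mem_Dom {x : E2} (hx : x ∈ Dom) : ‖x‖ ≤ 2 := by
  have hsq : ‖x‖ ^ 2 ≤ 2 ^ 2 := by
    rw [EuclideanSpace.real_norm_sq_eq, Fin.sum_univ_two]
    nlinarith [hx.1.1, hx.1.2, hx.2.1, hx.2.2]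
  exact (pow_le_pow_iff_left₀ (norm_nonneg x) zero_le_two two_ne_zero).1 hsq

theorem isCompact_Dom : IsCompact Dom := by
  refine Metric.isCompact_of_isClosed_isBounded ?_ (isBounded_closedBall (x := (0 : E2)) (r := 2)
    |>.subset fun x hx => mem_closedBall_zero_iff.2 (norm_le_two_of_mem_Dom hx))
  exact (isClosed_Icc.preimage (by fun_prop)).inter (isClosed_Icc.preimage (by fun_prop))

theorem dist_iterate_le_dn {f : E2 → E2} (hcont : Continuous f) {x y : E2} (hx : x ∈ Dom)
    (hy : y ∈ Dom) (n : ℕ) : dist (f^[n] x) (f^[n] y) ≤ dn f n :=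
  dist_le_diam_of_mem (isCompact_Dom.image (hcont.iterate n)).isBounded
    (mem_image_of_mem _ hx) (mem_image_of_mem _ hy)

theorem IsLift.norm_displacement_sub_le {f : E2 → E2} (hf : IsLift f) (hcont : Continuous f)
    {x₀ : E2} (hx₀ : x₀ ∈ Dom) (x : E2) (n : ℕ) :
    ‖(f^[n] x - x) - (f^[n] x₀ - x₀)‖ ≤ dn f n + 4 := by
  obtain ⟨y, hy, w, rfl⟩ := exists_mem_Dom_add_intVec x
  rw [hf.iterate n y w]
  calc ‖(f^[n] y + intVec w - (y + intVec w)) - (f^[n] x₀ - x₀)‖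
      = ‖(f^[n] y - f^[n] x₀) - (y - x₀)‖ := by congr 1; abel
    _ ≤ ‖f^[n] y - f^[n] x₀‖ + (‖y‖ + ‖x₀‖) :=
        (norm_sub_le _ _).trans (by gcongr; exact norm_sub_le _ _)
    _ ≤ dn f n + (2 + 2) := by
      gcongr
      · exact (dist_eq_norm _ _).symm.le.trans (dist_iterate_le_dn hcont hy hx₀ n)
      · exact norm_le_two_of_mem_Dom hy
      · exact norm_le_two_of_mem_Dom hx₀
    _ = dn f n + 4 := by norm_num

theorem IsLift.boundedDeviation_of_bddAbove_dn {f : E2 → E2} (hf : IsLift f)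
    (hcont : Continuous f) {v : E2} (hv : v ≠ 0) (hd : BddAbove (range (dn f))) :
    BoundedDeviation f v := by
  obtain ⟨C, hC⟩ := hd
  have h0 : (0 : E2) ∈ Dom := by simp [Dom]
  refine boundedDeviation_of_abs_inner_sub_le hv 0 (c := (C + 4) * ‖v‖) fun x n => ?_
  calc |⟪(f^[n] x - x) - (f^[n] 0 - 0), v⟫| ≤ ‖(f^[n] x - x) - (f^[n] 0 - 0)‖ * ‖v‖ :=
        abs_real_inner_le_norm _ _
    _ ≤ (C + 4) * ‖v‖ := by
      gcongr
      exact (hf.norm_displacement_sub_le hcont h0 x n).trans (by linarith [hC (mem_range_self n)])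

theorem exists_strictMono_tendsto_atTop_of_not_bddAbove {u : ℕ → ℝ} (hu : ¬BddAbove (range u)) :
    ∃ φ : ℕ → ℕ, StrictMono φ ∧ Tendsto (u ∘ φ) atTop atTop := by
  have hfreq : ∀ k : ℕ, ∃ᶠ n in atTop, (k : ℝ) ≤ u n := fun k => by
    by_contra h
    rw [not_frequently] at h
    exact hu (isBoundedUnder_of_eventually_le (h.mono fun n hn => (not_le.1 hn).le)).bddAbove_range
  obtain ⟨φ, hφ, hle⟩ := extraction_forall_of_frequently hfreq
  exact ⟨φ, hφ, tendsto_atTop_mono hle tendsto_natCast_atTop_atTop⟩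

theorem exists_subseq_tendsto_hausdorffDist {α : Type*} [MetricSpace α] {K : Set α}
    (hK : IsCompact K) {s : ℕ → Set α} (hs : ∀ n, IsCompact (s n)) (hne : ∀ n, (s n).Nonempty)
    (hsK : ∀ n, s n ⊆ K) :
    ∃ t : Set α, t.Nonempty ∧ IsCompact t ∧ ∃ φ : ℕ → ℕ, StrictMono φ ∧
      Tendsto (fun k => hausdorffDist (s (φ k)) t) atTop (𝓝 0) := by
  let S : ℕ → TopologicalSpace.NonemptyCompacts α := fun n => ⟨⟨s n, hs n⟩, hne n⟩
  obtain ⟨T, -, φ, hφ, hT⟩ :=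
    (TopologicalSpace.NonemptyCompacts.isCompact_subsets_of_isCompact hK).tendsto_subseq
      (x := S) hsK
  exact ⟨T, T.nonempty, T.isCompact, φ, hφ, tendsto_iff_dist_tendsto_zero.1 hT⟩

theorem zero_mem_An {f : E2 → E2} {x₀ : E2} (hx₀ : x₀ ∈ Dom) (n : ℕ) : (0 : E2) ∈ An f x₀ n :=
  ⟨f^[n] x₀, mem_image_of_mem _ hx₀, by simp⟩

theorem An_subset_closedBall {f : E2 → E2} (hcont : Continuous f) {x₀ : E2} (hx₀ : x₀ ∈ Dom)
    (n : ℕ) : An f x₀ n ⊆ closedBall 0 1 := by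
  rintro _ ⟨_, ⟨y, hy, rfl⟩, rfl⟩
  have hdn : 0 ≤ dn f n := diam_nonneg
  rw [mem_closedBall_zero_iff, norm_smul, norm_inv, Real.norm_of_nonneg hdn, ← dist_eq_norm]
  exact inv_mul_le_one_of_le₀ (dist_iterate_le_dn hcont hy hx₀ n) hdn

theorem isCompact_An {f : E2 → E2} (hcont : Continuous f) (x₀ : E2) (n : ℕ) :
    IsCompact (An f x₀ n) :=
  (isCompact_Dom.image (hcont.iterate n)).image (by fun_prop)

/-- If `f` has unbounded deviation in some direction, then the sequence `(A_n)`
admits at least one (nonempty) good limit value. -/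
theorem exists_good_limit_of_unbounded_deviation (f : E2 ≃ₜ E2) (hf : IsLift ⇑f)
    (x₀ : E2) (hx₀ : x₀ ∈ Dom)
    (v : E2) (hv : v ≠ 0) (hdev : ¬ BoundedDeviation ⇑f v) :
    ∃ A : Set E2, A.Nonempty ∧ IsGoodLimit ⇑f x₀ A := by
  have hunbdd : ¬BddAbove (range (dn f)) := fun hd =>
    hdev (hf.boundedDeviation_of_bddAbove_dn f.continuous hv hd)
  obtain ⟨φ, hφ, hφtop⟩ := exists_strictMono_tendsto_atTop_of_not_bddAbove hunbdd
  obtain ⟨A, hAne, hAc, ψ, hψ, hlim⟩ := exists_subseq_tendsto_hausdorffDist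
    (isCompact_closedBall (0 : E2) 1) (fun k => isCompact_An f.continuous x₀ (φ k))
    (fun k => ⟨0, zero_mem_An hx₀ (φ k)⟩) (fun k => An_subset_closedBall f.continuous hx₀ (φ k))
  exact ⟨A, hAne, hAc, φ ∘ ψ, hφ.comp hψ, hφtop.comp hψ.tendsto_atTop, hlim⟩
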